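/- Let n ≥ 1 be an integer and r > 0. The subgroup of the Heisenberg group H^n generated by the sphere S_r^n = {(z,0) ∈ H^n : ‖z‖ = r} is all of H^n. -/

import Mathlib

open MeasureTheory

/-- The underlying space of the Heisenberg group `H^n = ℂ^n × ℝ`. -/
abbrev Heis (n : ℕ) := EuclideanSpace ℂ (Fin n) × ℝ

/-- The Heisenberg group multiplication
`(z,t)·(w,s) = (z+w, t+s+(1/2)Im⟨z,w⟩)` with `⟨z,w⟩ = ∑ j, z j * conj (w j)`. -/
noncomputable def heisMul {n : ℕ} (p q : Heis n) : Heis n :=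
  (p.1 + q.1, p.2 + q.2 + (1 / 2) * (∑ j, p.1 j * (starRingEnd ℂ) (q.1 j)).im)

/-- The Heisenberg group structure on `ℂ^n × ℝ`. -/
noncomputable instance heisGroup (n : ℕ) : Group (Heis n) where
  mul := heisMul
  one := ((0 : EuclideanSpace ℂ (Fin n)), (0 : ℝ))
  inv p := (-p.1, -p.2)
  mul_assoc p q s := by
    show heisMul (heisMul p q) s = heisMul p (heisMul q s)
    refine Prod.ext (add_assoc _ _ _) ?_
    simp only [heisMul, PiLp.add_apply, map_add, add_mul, mul_add, Finset.sum_add_distrib,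
      Complex.add_im]
    ring
  one_mul p := by
    show heisMul ((0 : EuclideanSpace ℂ (Fin n)), (0 : ℝ)) p = p
    refine Prod.ext (zero_add _) ?_
    simp [heisMul]
  mul_one p := by
    show heisMul p ((0 : EuclideanSpace ℂ (Fin n)), (0 : ℝ)) = p
    refine Prod.ext (add_zero _) ?_
    simp [heisMul]
  inv_mul_cancel p := by
    show heisMul (-p.1, -p.2) p = ((0 : EuclideanSpace ℂ (Fin n)), (0 : ℝ))
    have h : (∑ j, (-p.1 : EuclideanSpace ℂ (Fin n)) j * (starRingEnd ℂ) (p.1 j)).im = 0 := by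
      simp only [Complex.im_sum]
      refine Finset.sum_eq_zero fun j _ => ?_
      have hj : (-p.1 : EuclideanSpace ℂ (Fin n)) j = -(p.1 j) := rfl
      rw [hj, neg_mul, Complex.neg_im, Complex.mul_conj]
      simp
    refine Prod.ext (neg_add_cancel _) ?_
    show -p.2 + p.2 +
        (1 / 2) * (∑ j, (-p.1 : EuclideanSpace ℂ (Fin n)) j * (starRingEnd ℂ) (p.1 j)).im = 0
    rw [h]; ring

/-- The sphere `S_r^n = {(z,0) : ‖z‖ = r}` in the Heisenberg group. -/
def heisSphere (n : ℕ) (r : ℝ) : Set (Heis n) := {p : Heis n | ‖p.1‖ = r ∧ p.2 = 0}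

/-!
Commutators of horizontal elements are central: `⁅(u,0), (v,0)⁆ = (0, Im⟪v,u⟫)`. Rotating a point
`u` of the sphere by a unit complex number realises every `(0,s)` with `|s| ≤ r²` this way, and
since every `w` with `‖w‖ ≤ 2r` is a sum of two points of the sphere, the subgroup contains a
neighbourhood of the identity. Finally `p ^ k = k • p`, so every element is a power of an element
of that neighbourhood.
-/

theorem Complex.exists_re_eq_norm_eq {x ρ : ℝ} (h : |x| ≤ ρ) : ∃ a : ℂ, a.re = x ∧ ‖a‖ = ρ := by
  have hρ : 0 ≤ ρ := (abs_nonneg x).trans h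
  have hx : x ^ 2 ≤ ρ ^ 2 := sq_le_sq' (abs_le.mp h).1 (abs_le.mp h).2
  refine ⟨⟨x, √(ρ ^ 2 - x ^ 2)⟩, rfl, ?_⟩
  rw [Complex.norm_def, Complex.normSq_mk, ← sq, ← sq, Real.sq_sqrt (sub_nonneg.mpr hx),
    add_sub_cancel, Real.sqrt_sq hρ]

theorem exists_norm_eq_norm_eq_add_eq {E : Type*} [NormedAddCommGroup E] [NormedSpace ℂ E]
    [Nontrivial E] {r : ℝ} {w : E} (hw : ‖w‖ ≤ 2 * r) :
    ∃ u v : E, ‖u‖ = r ∧ ‖v‖ = r ∧ u + v = w := by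
  rcases eq_or_ne w 0 with rfl | hw0
  · obtain ⟨u, hu⟩ := exists_norm_eq E (by linarith [norm_nonneg (0 : E)] : 0 ≤ r)
    exact ⟨u, -u, hu, by rw [norm_neg, hu], add_neg_cancel u⟩
  have hw_pos : 0 < ‖w‖ := norm_pos_iff.mpr hw0
  -- `a` and `1 - a = conj a` are the two complex numbers of modulus `r / ‖w‖` with real part `1/2`
  obtain ⟨a, ha_re, ha_norm⟩ : ∃ a : ℂ, a.re = 1 / 2 ∧ ‖a‖ = r / ‖w‖ :=
    Complex.exists_re_eq_norm_eq (by rw [le_div_iff₀ hw_pos, abs_of_pos one_half_pos]; linarith)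
  have h_conj : 1 - a = (starRingEnd ℂ) a := Complex.ext (by simp [ha_re]; norm_num) (by simp)
  refine ⟨a • w, (1 - a) • w, ?_, ?_, by rw [← add_smul, add_sub_cancel, one_smul]⟩
  · rw [norm_smul, ha_norm, div_mul_cancel₀ _ hw_pos.ne']
  · rw [norm_smul, h_conj, Complex.norm_conj, ha_norm, div_mul_cancel₀ _ hw_pos.ne']

open scoped commutatorElement

namespace Heis

variable {n : ℕ}

lemma mul_def (p q : Heis n) :
    p * q = (p.1 + q.1, p.2 + q.2 + 1 / 2 * (inner ℂ q.1 p.1).im) := by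
  simp only [PiLp.inner_apply, RCLike.inner_apply]
  rfl

lemma inv_def (p : Heis n) : p⁻¹ = (-p.1, -p.2) := rfl

lemma pow_eq_smul (p : Heis n) (k : ℕ) : p ^ k = (k : ℝ) • p := by
  induction k with
  | zero => simp only [pow_zero, Nat.cast_zero, zero_smul]; rfl
  | succ k ih =>
    rw [pow_succ, ih, mul_def]
    ext <;> simp [add_smul, ← Complex.ofReal_pow]

lemma commutatorElement_horizontal (u v : EuclideanSpace ℂ (Fin n)) :
    ⁅((u, 0) : Heis n), (v, 0)⁆ = (0, (inner ℂ v u).im) := by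
  simp only [commutatorElement_def, mul_def, inv_def]
  have h : (inner ℂ u v).im = -(inner ℂ v u).im := inner_im_symm (𝕜 := ℂ) u v
  ext <;> simp [inner_neg_left, ← Complex.ofReal_pow, h]
  ring

lemma eq_top_of_forall_norm_le_mem (S : Subgroup (Heis n)) {ε : ℝ} (hε : 0 < ε)
    (h : ∀ p : Heis n, ‖p‖ ≤ ε → p ∈ S) : S = ⊤ := by
  refine S.eq_top_iff'.mpr fun p => ?_
  obtain ⟨k, hk⟩ := exists_nat_gt (‖p‖ / ε)
  have hk_pos : (0 : ℝ) < k := (div_nonneg (norm_nonneg p) hε.le).trans_lt hk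
  have hp : p = ((k : ℝ)⁻¹ • p) ^ k := by
    rw [pow_eq_smul, smul_smul, mul_inv_cancel₀ hk_pos.ne', one_smul]
  rw [hp]
  refine pow_mem (h _ ?_) k
  rw [norm_smul, norm_inv, Real.norm_natCast, inv_mul_le_iff₀ hk_pos]
  exact ((div_lt_iff₀ hε).mp hk).le

lemma horizontal_mem_closure_heisSphere {r : ℝ} {u : EuclideanSpace ℂ (Fin n)} (hu : ‖u‖ = r) :
    ((u, 0) : Heis n) ∈ Subgroup.closure (heisSphere n r) :=
  Subgroup.subset_closure ⟨hu, rfl⟩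

variable [NeZero n] {r : ℝ}

lemma central_mem_closure_heisSphere (hr : 0 < r) {s : ℝ} (hs : |s| ≤ r ^ 2) :
    ((0, s) : Heis n) ∈ Subgroup.closure (heisSphere n r) := by
  have hr2 : 0 < r ^ 2 := by positivity
  obtain ⟨u, hu⟩ := exists_norm_eq (EuclideanSpace ℂ (Fin n)) hr.le
  obtain ⟨a, ha_re, ha_norm⟩ : ∃ a : ℂ, a.re = s / r ^ 2 ∧ ‖a‖ = 1 :=
    Complex.exists_re_eq_norm_eq (by rwa [abs_div, abs_of_pos hr2, div_le_one hr2])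
  have h_comm : ⁅(((Complex.I * a) • u, 0) : Heis n), (u, 0)⁆ = (0, s) := by
    rw [commutatorElement_horizontal, inner_smul_right, inner_self_eq_norm_sq_to_K, hu]
    simp [← Complex.ofReal_pow, ha_re, hr2.ne']
  have hu_mem := horizontal_mem_closure_heisSphere hu
  have hv_mem : (((Complex.I * a) • u, 0) : Heis n) ∈ Subgroup.closure (heisSphere n r) :=
    horizontal_mem_closure_heisSphere (by simp [norm_smul, ha_norm, hu])
  rw [← h_comm, commutatorElement_def]
  exact mul_mem (mul_mem (mul_mem hv_mem hu_mem) (inv_mem hv_mem)) (inv_mem hu_mem)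

lemma mem_closure_heisSphere_of_norm_le (hr : 0 < r) {p : Heis n} (h₁ : ‖p.1‖ ≤ 2 * r)
    (h₂ : |p.2| ≤ r ^ 2 / 2) : p ∈ Subgroup.closure (heisSphere n r) := by
  obtain ⟨u, v, hu, hv, huv⟩ := exists_norm_eq_norm_eq_add_eq h₁
  set σ := 1 / 2 * (inner ℂ v u).im
  have hσ : |σ| ≤ r ^ 2 / 2 := by
    have := (Complex.abs_im_le_norm _).trans (norm_inner_le_norm (𝕜 := ℂ) v u)
    rw [hu, hv] at this
    rw [abs_mul, abs_of_pos one_half_pos]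
    linarith
  have hp : p = (u, 0) * (v, 0) * (0, p.2 - σ) := by
    simp only [mul_def, inner_zero_left]
    ext <;> simp [huv, σ]
  rw [hp]
  refine mul_mem (mul_mem ?_ ?_) (central_mem_closure_heisSphere hr ?_)
  · exact horizontal_mem_closure_heisSphere hu
  · exact horizontal_mem_closure_heisSphere hv
  · calc |p.2 - σ| ≤ |p.2| + |σ| := abs_sub _ _
      _ ≤ r ^ 2 := by linarith

end Heis

theorem stmt16 (n : ℕ) (hn : 1 ≤ n) (r : ℝ) (hr : 0 < r) :
    Subgroup.closure (heisSphere n r) = ⊤ := by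
  have : NeZero n := ⟨by omega⟩
  refine Heis.eq_top_of_forall_norm_le_mem _ (lt_min (by positivity) (by positivity) :
    0 < min (2 * r) (r ^ 2 / 2)) fun p hp => ?_
  rw [le_min_iff] at hp
  exact Heis.mem_closure_heisSphere_of_norm_le hr ((norm_fst_le p).trans hp.1)
    ((norm_snd_le p).trans hp.2)
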